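/- arXiv:2402.18666 — 3 statements merged into one kernel-verified Lean document; each statement's English description precedes it below -/
import Mathlib

section
/- Almost surely, (1/(m·p(m)))·tr(Ā_m Ā_mᵀ) − ((1/(m·p(m)))·tr(A_m A_mᵀ) + σ²/n) → 0 as m → ∞. -/
/-!
Writing `s = σ / √n`, expanding the square gives
`(1/(mp)) tr(Ā Āᵀ) - (1/(mp)) tr(A Aᵀ) - s² = 2 s Yₘ + s² Zₘ`, with
`Yₘ = (1/(mp)) ∑ Aᵢⱼ eᵢⱼ` and `Zₘ = (1/(mp)) ∑ (eᵢⱼ² - 1)`.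
Both are normalized weighted sums of independent centered variables, so their variances are
`O(1/(mp)) = O(1/m²)` because `m/p(m) → c`; being summable, Chebyshev's inequality and
Borel–Cantelli give `Yₘ, Zₘ → 0` almost surely.
-/

open MeasureTheory ProbabilityTheory Filter Matrix Topology

-- Also true when `a` or `b` vanishes, both sides being `0`.
theorem one_div_mul_eq_div_mul_one_div_sq (a b : ℝ) : 1 / (a * b) = a / b * (1 / a ^ 2) := by
  rcases eq_or_ne a 0 with rfl | ha
  · simp
  field_simp

theorem summable_one_div_mul_of_tendsto_div {p : ℕ → ℕ} {c : ℝ}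
    (hp : Tendsto (fun m : ℕ => (m : ℝ) / p m) atTop (𝓝 c)) :
    Summable fun m : ℕ => 1 / ((m : ℝ) * p m) := by
  refine Summable.of_norm_bounded_eventually_nat
    ((Real.summable_one_div_nat_pow.2 one_lt_two).mul_left (c + 1)) ?_
  filter_upwards [hp.eventually (eventually_lt_nhds (lt_add_one c))] with m hm
  rw [Real.norm_of_nonneg (by positivity), one_div_mul_eq_div_mul_one_div_sq]
  exact mul_le_mul_of_nonneg_right hm.le (by positivity)

theorem eventually_pos_mul_of_tendsto_div {p : ℕ → ℕ} {c : ℝ} (hc : 0 < c)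
    (hp : Tendsto (fun m : ℕ => (m : ℝ) / p m) atTop (𝓝 c)) :
    ∀ᶠ m : ℕ in atTop, 0 < (m : ℝ) * p m := by
  filter_upwards [hp.eventually (lt_mem_nhds hc)] with m hm
  rcases div_pos_iff.1 hm with ⟨hm, hpm⟩ | ⟨hm, -⟩
  · exact mul_pos hm hpm
  · exact absurd hm (Nat.cast_nonneg m).not_gt

namespace Matrix

theorem trace_mul_transpose_self {k l : Type*} [Fintype k] [Fintype l] (M : Matrix k l ℝ) :
    (M * Mᵀ).trace = ∑ i, ∑ j, M i j ^ 2 := by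
  simp [trace, mul_apply, sq]

theorem trace_add_smul_mul_transpose {k l : Type*} [Fintype k] [Fintype l]
    (M N : Matrix k l ℝ) (s : ℝ) :
    ((M + s • N) * (M + s • N)ᵀ).trace =
      (M * Mᵀ).trace + 2 * s * ∑ i, ∑ j, M i j * N i j + s ^ 2 * ∑ i, ∑ j, N i j ^ 2 := by
  simp only [trace_mul_transpose_self, add_apply, smul_apply, smul_eq_mul, Finset.mul_sum,
    ← Finset.sum_add_distrib]
  congr! 2
  ring

theorem one_div_mul_trace_ones_le (k l : ℕ) :
    1 / (k * l : ℝ) *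
        (of (fun _ _ => 1 : Fin k → Fin l → ℝ) *
          (of (fun _ _ => 1 : Fin k → Fin l → ℝ))ᵀ).trace ≤ 1 := by
  simp only [trace_mul_transpose_self, of_apply, one_pow, Finset.sum_const, Finset.card_univ,
    Fintype.card_fin, nsmul_eq_mul, mul_one]
  rw [one_div]
  exact inv_mul_le_one

end Matrix

noncomputable def normalizedWeightedSum {Ω : Type*} {k l : ℕ} (W : Matrix (Fin k) (Fin l) ℝ)
    (X : ℕ → ℕ → Ω → ℝ) (ω : Ω) : ℝ :=
  1 / (k * l : ℝ) * ∑ i, ∑ j, W i j * X i j ω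

theorem normalizedWeightedSum_trace_add_smul_sub {Ω : Type*} {k l : ℕ}
    (hkl : (k : ℝ) * l ≠ 0)
    (M : Matrix (Fin k) (Fin l) ℝ) (X : ℕ → ℕ → Ω → ℝ) (s : ℝ) (ω : Ω) :
    1 / (k * l : ℝ) * ((M + s • of fun (i : Fin k) (j : Fin l) => X i j ω) *
        (M + s • of fun (i : Fin k) (j : Fin l) => X i j ω)ᵀ).trace
        - (1 / (k * l : ℝ) * (M * Mᵀ).trace + s ^ 2) =
      2 * s * normalizedWeightedSum M X ω +
        s ^ 2 * normalizedWeightedSum (of fun (_ : Fin k) (_ : Fin l) => 1)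
          (fun i j ω => X i j ω ^ 2 - 1) ω := by
  rw [trace_add_smul_mul_transpose]
  simp only [normalizedWeightedSum, of_apply, one_mul, Finset.sum_sub_distrib, Finset.sum_const,
    Finset.card_univ, Fintype.card_fin, nsmul_eq_mul, mul_one]
  rw [mul_sub, one_div_mul_cancel hkl]
  ring

section Probability

variable {Ω : Type*} [MeasurableSpace Ω] {μ : Measure Ω}

theorem ProbabilityTheory.IndepFun.variance_sum_const_mul {ι : Type*} {s : Finset ι}
    {X : ι → Ω → ℝ} (a : ι → ℝ) (hX : ∀ i ∈ s, MemLp (X i) 2 μ)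
    (h : Set.Pairwise s fun i j => X i ⟂ᵢ[μ] X j) :
    variance (fun ω => ∑ i ∈ s, a i * X i ω) μ =
      ∑ i ∈ s, a i ^ 2 * variance (X i) μ := by
  have hsum : (fun ω => ∑ i ∈ s, a i * X i ω) = ∑ i ∈ s, fun ω => a i * X i ω := by
    ext ω
    simp [Finset.sum_apply]
  rw [hsum, IndepFun.variance_sum (fun i hi => (hX i hi).const_mul (a i))
    (h.mono' fun i j hij => hij.comp (measurable_const_mul _) (measurable_const_mul _))]
  exact Finset.sum_congr rfl fun i _ => variance_const_mul _ _ _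

theorem memLp_two_sq_sub_const [IsFiniteMeasure μ] {X : Ω → ℝ}
    (hX : AEStronglyMeasurable X μ)
    (h4 : Integrable (fun ω => X ω ^ 4) μ) (c : ℝ) : MemLp (fun ω => X ω ^ 2 - c) 2 μ := by
  refine MemLp.sub ?_ (memLp_const c)
  refine (memLp_two_iff_integrable_sq (hX.pow 2)).2 ?_
  simpa only [Pi.pow_apply, ← pow_mul] using h4

theorem ae_tendsto_sub_integral_of_summable_variance [IsFiniteMeasure μ] {X : ℕ → Ω → ℝ}
    (hX : ∀ m, MemLp (X m) 2 μ) (hvar : Summable fun m => variance (X m) μ) :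
    ∀ᵐ ω ∂μ, Tendsto (fun m => X m ω - μ[X m]) atTop (𝓝 0) := by
  have h_eventually (k : ℕ) :
      ∀ᵐ ω ∂μ, ∀ᶠ m in atTop, |X m ω - μ[X m]| < 1 / (k + 1 : ℝ) := by
    have hε : (0 : ℝ) < 1 / (k + 1 : ℝ) := by positivity
    have h_tsum : ∑' m, μ {ω | 1 / (k + 1 : ℝ) ≤ |X m ω - μ[X m]|} ≠ ⊤ := by
      refine ne_top_of_le_ne_top ?_
        (ENNReal.tsum_le_tsum fun m => meas_ge_le_variance_div_sq (hX m) hε)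
      rw [← ENNReal.ofReal_tsum_of_nonneg
        (fun m => div_nonneg (variance_nonneg _ _) (sq_nonneg _)) (hvar.div_const _)]
      exact ENNReal.ofReal_ne_top
    filter_upwards [ae_eventually_notMem h_tsum] with ω hω
    simpa only [Set.mem_ofPred_eq, not_le] using hω
  filter_upwards [ae_all_iff.2 h_eventually] with ω hω
  rw [NormedAddGroup.tendsto_nhds_zero]
  intro ε hε
  obtain ⟨k, hk⟩ := exists_nat_one_div_lt hε
  filter_upwards [hω k] with m hm
  exact hm.trans hk

section normalizedWeightedSum

variable {k l : ℕ} {W : Matrix (Fin k) (Fin l) ℝ} {X : ℕ → ℕ → Ω → ℝ}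

theorem memLp_normalizedWeightedSum (hX : ∀ i j, MemLp (X i j) 2 μ) :
    MemLp (normalizedWeightedSum W X) 2 μ :=
  (memLp_finsetSum _ fun (i : Fin k) _ => memLp_finsetSum _ fun (j : Fin l) _ =>
    (hX i j).const_mul (W i j)).const_mul _

theorem integral_normalizedWeightedSum [IsFiniteMeasure μ] (hX : ∀ i j, MemLp (X i j) 2 μ)
    (hmean : ∀ i j, μ[X i j] = 0) : μ[normalizedWeightedSum W X] = 0 := by
  have hint (i j : ℕ) : Integrable (X i j) μ := (hX i j).integrable one_le_two
  simp only [normalizedWeightedSum, integral_const_mul]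
  rw [integral_finsetSum _ fun (i : Fin k) _ => integrable_finsetSum _ fun (j : Fin l) _ =>
    (hint i j).const_mul (W i j)]
  refine mul_eq_zero_of_right _ (Finset.sum_eq_zero fun i _ => ?_)
  rw [integral_finsetSum _ fun (j : Fin l) _ => (hint i j).const_mul (W i j)]
  simp [integral_const_mul, hmean]

theorem variance_normalizedWeightedSum_le (hX : ∀ i j, MemLp (X i j) 2 μ)
    (hindep : Pairwise fun q q' : ℕ × ℕ => X q.1 q.2 ⟂ᵢ[μ] X q'.1 q'.2)
    {K : ℝ} (hK : ∀ i j, variance (X i j) μ ≤ K) :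
    variance (normalizedWeightedSum W X) μ ≤ (1 / (k * l : ℝ)) ^ 2 * K * (W * Wᵀ).trace := by
  have hind : Set.Pairwise (Finset.univ : Finset (Fin k × Fin l))
      fun q q' : Fin k × Fin l => X q.1 q.2 ⟂ᵢ[μ] X q'.1 q'.2 := fun q _ q' _ hqq' =>
    @hindep (q.1, q.2) (q'.1, q'.2) fun h =>
      hqq' (Prod.ext (Fin.ext (congrArg Prod.fst h)) (Fin.ext (congrArg Prod.snd h)))
  have hsum : normalizedWeightedSum W X =
      fun ω => 1 / (k * l : ℝ) * ∑ q : Fin k × Fin l, W q.1 q.2 * X q.1 q.2 ω := by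
    ext ω
    rw [normalizedWeightedSum, Fintype.sum_prod_type]
  calc variance (normalizedWeightedSum W X) μ
      = (1 / (k * l : ℝ)) ^ 2 *
          ∑ q : Fin k × Fin l, W q.1 q.2 ^ 2 * variance (X q.1 q.2) μ := by
        rw [hsum, variance_const_mul, IndepFun.variance_sum_const_mul _ (fun q _ => hX _ _) hind]
    _ ≤ (1 / (k * l : ℝ)) ^ 2 * ∑ q : Fin k × Fin l, W q.1 q.2 ^ 2 * K := by
        gcongr with q
        exact hK _ _
    _ = (1 / (k * l : ℝ)) ^ 2 * K * (W * Wᵀ).trace := by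
        rw [trace_mul_transpose_self, ← Finset.sum_mul, Fintype.sum_prod_type]
        ring

end normalizedWeightedSum

theorem ae_tendsto_normalizedWeightedSum [IsFiniteMeasure μ] {p : ℕ → ℕ}
    (hp : Summable fun m : ℕ => 1 / ((m : ℝ) * p m))
    {X : ℕ → ℕ → Ω → ℝ} (hX : ∀ i j, MemLp (X i j) 2 μ)
    (hmean : ∀ i j, μ[X i j] = 0)
    (hindep : Pairwise fun q q' : ℕ × ℕ => X q.1 q.2 ⟂ᵢ[μ] X q'.1 q'.2)
    {K : ℝ} (hK : ∀ i j, variance (X i j) μ ≤ K)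
    (W : ∀ m, Matrix (Fin m) (Fin (p m)) ℝ) {C : ℝ}
    (hW : ∀ m, 1 / (m * p m : ℝ) * (W m * (W m)ᵀ).trace ≤ C) :
    ∀ᵐ ω ∂μ, Tendsto (fun m => normalizedWeightedSum (W m) X ω) atTop (𝓝 0) := by
  have hK_nonneg : 0 ≤ K := (variance_nonneg _ _).trans (hK 0 0)
  have hvar (m : ℕ) :
      variance (normalizedWeightedSum (W m) X) μ ≤ K * C * (1 / (m * p m : ℝ)) := by
    refine (variance_normalizedWeightedSum_le hX hindep hK).trans ?_
    have := mul_le_mul_of_nonneg_left (hW m) (by positivity : 0 ≤ K * (1 / (m * p m : ℝ)))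
    linarith
  have hsummable := (hp.mul_left (K * C)).of_nonneg_of_le (fun m => variance_nonneg _ _) hvar
  filter_upwards [ae_tendsto_sub_integral_of_summable_variance
    (fun m => memLp_normalizedWeightedSum hX) hsummable] with ω hω
  simpa [integral_normalizedWeightedSum hX hmean] using hω

end Probability

theorem stmt3_general
    {Ω : Type*} [MeasureSpace Ω] [IsProbabilityMeasure (ℙ : Measure Ω)]
    (c : ℝ) (hc : 0 < c)
    (p : ℕ → ℕ)
    (hp : Tendsto (fun m : ℕ => (m : ℝ) / (p m : ℝ)) atTop (nhds c))
    (e : ℕ → ℕ → Ω → ℝ)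
    (hmeas : ∀ i j, Measurable (e i j))
    (hindep : iIndepFun (fun q : ℕ × ℕ => e q.1 q.2) ℙ)
    (hident : ∀ i j, IdentDistrib (e i j) (e 0 0) ℙ ℙ)
    (hsq : ∀ i j, Integrable (fun ω => (e i j ω) ^ 2))
    (hmean : ∀ i j, ∫ ω, e i j ω = 0)
    (hvar : ∀ i j, ∫ ω, (e i j ω) ^ 2 = 1)
    (hmom4 : ∀ i j, Integrable (fun ω => (e i j ω) ^ 4))
    (A : ∀ m : ℕ, Matrix (Fin m) (Fin (p m)) ℝ)
    (hA : ∃ C : ℝ, ∀ m : ℕ, (1 / (m * p m : ℝ)) * (A m * (A m)ᵀ).trace ≤ C)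
    (n : ℕ) (σ : ℝ)
    (Abar : ∀ m : ℕ, Ω → Matrix (Fin m) (Fin (p m)) ℝ)
    (hAbar : ∀ m ω, Abar m ω =
      A m + (σ / Real.sqrt n) • Matrix.of fun i j => e i.val j.val ω) :
    ∀ᵐ ω, Tendsto
      (fun m : ℕ => (1 / (m * p m : ℝ)) * (Abar m ω * (Abar m ω)ᵀ).trace - ((1 / (m * p m : ℝ)) * (A m * (A m)ᵀ).trace + σ ^ 2 / n))
      atTop (nhds 0) := by
  obtain ⟨C, hC⟩ := hA
  have hsum := summable_one_div_mul_of_tendsto_div hp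
  have hsq_sub : Measurable fun x : ℝ => x ^ 2 - 1 := by fun_prop
  have hL2 (i j : ℕ) : MemLp (e i j) 2 ℙ :=
    (memLp_two_iff_integrable_sq (hmeas i j).aestronglyMeasurable).2 (hsq i j)
  have hY := ae_tendsto_normalizedWeightedSum hsum hL2 hmean (fun q q' h => hindep.indepFun h)
    (K := 1) (fun i j => by rw [variance_eq_sub (hL2 i j)]; simp [hvar, hmean]) A hC
  have hZ := ae_tendsto_normalizedWeightedSum hsum
    (fun i j => memLp_two_sq_sub_const (hmeas i j).aestronglyMeasurable (hmom4 i j) 1)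
    (fun i j => by rw [integral_sub (hsq i j) (integrable_const 1), hvar]; simp)
    (fun q q' h => (hindep.indepFun h).comp hsq_sub hsq_sub)
    (fun i j => ((hident i j).comp hsq_sub).variance_eq.le) _
    (fun m => one_div_mul_trace_ones_le m (p m))
  have hs : σ ^ 2 / n = (σ / √n) ^ 2 := by rw [div_pow, Real.sq_sqrt n.cast_nonneg]
  filter_upwards [hY, hZ] with ω hYω hZω
  have hlim := (hYω.const_mul (2 * (σ / √n))).add (hZω.const_mul ((σ / √n) ^ 2))
  rw [mul_zero, mul_zero, add_zero] at hlim
  refine hlim.congr' ?_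
  filter_upwards [eventually_pos_mul_of_tendsto_div hc hp] with m hm
  rw [hAbar, hs, normalizedWeightedSum_trace_add_smul_sub hm.ne']

/-- a.s. (1/(mp))·tr(Ā_m Ā_mᵀ) − ((1/(mp))·tr(A_m A_mᵀ) + σ²/n) → 0 as m → ∞. -/
theorem stmt3
    {Ω : Type*} [MeasureSpace Ω] [IsProbabilityMeasure (ℙ : Measure Ω)]
    (c : ℝ) (hc : 0 < c)
    (p : ℕ → ℕ)
    (hp : Tendsto (fun m : ℕ => (m : ℝ) / (p m : ℝ)) atTop (nhds c))
    (e : ℕ → ℕ → Ω → ℝ)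
    (hmeas : ∀ i j, Measurable (e i j))
    (hindep : iIndepFun (fun q : ℕ × ℕ => e q.1 q.2) ℙ)
    (hident : ∀ i j, IdentDistrib (e i j) (e 0 0) ℙ ℙ)
    (hint : ∀ i j, Integrable (e i j))
    (hsq : ∀ i j, Integrable (fun ω => (e i j ω) ^ 2))
    (hmean : ∀ i j, ∫ ω, e i j ω = 0)
    (hvar : ∀ i j, ∫ ω, (e i j ω) ^ 2 = 1)
    (hmom4 : ∀ i j, Integrable (fun ω => (e i j ω) ^ 4))
    (A : ∀ m : ℕ, Matrix (Fin m) (Fin (p m)) ℝ)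
    (hA : ∃ C : ℝ, ∀ m : ℕ, (1 / (m * p m : ℝ)) * (A m * (A m)ᵀ).trace ≤ C)
    (U : ∀ m : ℕ, Matrix (Fin m) (Fin (p m)) ℝ)
    (hU : ∀ m i j, U m i j = 1)
    (n : ℕ) (hn : 2 ≤ n) (σ : ℝ) (hσ : 0 < σ)
    (Abar : ∀ m : ℕ, Ω → Matrix (Fin m) (Fin (p m)) ℝ)
    (hAbar : ∀ m ω, Abar m ω =
      A m + (σ / Real.sqrt n) • Matrix.of fun i j => e i.val j.val ω) :
    ∀ᵐ ω, Tendsto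
      (fun m : ℕ => (1 / (m * p m : ℝ)) * (Abar m ω * (Abar m ω)ᵀ).trace - ((1 / (m * p m : ℝ)) * (A m * (A m)ᵀ).trace + σ ^ 2 / n))
      atTop (nhds 0) :=
  stmt3_general c hc p hp e hmeas hindep hident hsq hmean hvar hmom4 A hA n σ Abar hAbar
end

section
/- Almost surely, (1/(m·p(m)))·tr(Ā_m A_mᵀ) − (1/(m·p(m)))·tr(A_m A_mᵀ) → 0 as m → ∞. -/
/-!
By linearity of the trace the difference is `(m p)⁻¹ n^{-1/2} ∑ᵢⱼ Bᵢⱼ eᵢⱼ` with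
`B = (Σ^{1/2})ᵀ A`, a weighted sum of independent centred variables. Its fourth moment is at
most `(M + 3) (∑ Bᵢⱼ²)²`, where `M` is the common fourth moment of the entries, and
`∑ Bᵢⱼ² ≤ tr Σ · tr (A Aᵀ) = O(m · m p)` by Cauchy–Schwarz. After normalisation the fourth
moment is `O(1 / p(m)²) = O(1 / m²)`, which is summable, and summable `L¹` norms force almost
sure convergence to `0`.
-/

open MeasureTheory ProbabilityTheory Filter Matrix Topology

lemma tendsto_zero_of_tendsto_abs_pow_zero {α : Type*} {l : Filter α} {u : α → ℝ} {k : ℕ}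
    (hk : k ≠ 0) (h : Tendsto (fun a => |u a| ^ k) l (𝓝 0)) : Tendsto u l (𝓝 0) := by
  rw [tendsto_zero_iff_abs_tendsto_zero]
  have hroot :=
    ((Real.continuous_rpow_const (by positivity : (0 : ℝ) ≤ (k : ℝ)⁻¹)).tendsto 0).comp h
  simpa [Function.comp_def, abs_pow, Real.pow_rpow_inv_natCast (abs_nonneg _) hk,
    Real.zero_rpow (inv_ne_zero (Nat.cast_ne_zero.2 hk))] using hroot

lemma summable_one_div_sq_of_tendsto_div {p : ℕ → ℕ} {c : ℝ}
    (hp : Tendsto (fun m : ℕ => (m : ℝ) / p m) atTop (𝓝 c)) :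
    Summable fun m => 1 / (p m : ℝ) ^ 2 := by
  set C := |c| + 1
  have hC : 0 < C := by positivity
  have hsum : Summable fun m : ℕ => C ^ 2 * (1 / (m : ℝ) ^ 2) :=
    (Real.summable_one_div_nat_pow.2 one_lt_two).mul_left _
  refine hsum.of_norm_bounded_eventually_nat ?_
  have hcC : c < C := (le_abs_self c).trans_lt (lt_add_one _)
  filter_upwards [hp.eventually (eventually_lt_nhds hcC), eventually_gt_atTop 0] with m hm hm0
  rw [Real.norm_of_nonneg (by positivity)]
  rcases (Nat.cast_nonneg (p m) : (0 : ℝ) ≤ p m).eq_or_lt with hp0 | hp0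
  · rw [← hp0, zero_pow two_ne_zero, div_zero]
    positivity
  · have hmC : (m : ℝ) ≤ C * p m := ((div_lt_iff₀ hp0).1 hm).le
    have hm0' : (0 : ℝ) < m := Nat.cast_pos.2 hm0
    rw [mul_one_div, div_le_div_iff₀ (by positivity) (by positivity)]
    nlinarith

theorem MeasureTheory.ae_tendsto_zero_of_summable_integral_norm {Ω E : Type*}
    {mΩ : MeasurableSpace Ω} {μ : Measure Ω} [NormedAddCommGroup E] {f : ℕ → Ω → E}
    (hf : ∀ k, Integrable (f k) μ) (hs : Summable fun k => ∫ ω, ‖f k ω‖ ∂μ) :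
    ∀ᵐ ω ∂μ, Tendsto (fun k => f k ω) atTop (𝓝 0) := by
  have hfin : ∑' k, eLpNorm (f k) 1 μ ≠ ⊤ := by
    simp_rw [eLpNorm_one_eq_lintegral_enorm, ← ofReal_integral_norm_eq_lintegral_enorm (hf _)]
    rw [← ENNReal.ofReal_tsum_of_nonneg (fun k => integral_nonneg fun ω => norm_nonneg _) hs]
    exact ENNReal.ofReal_ne_top
  filter_upwards [summable_norm_of_tsum_eLpNorm_ne_top le_rfl (fun k => (hf k).1) hfin] with ω hω
  exact tendsto_zero_iff_norm_tendsto_zero.2 hω.tendsto_atTop_zero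

lemma memLp_of_integrable_abs_rpow {Ω : Type*} {mΩ : MeasurableSpace Ω} {μ : Measure Ω}
    [IsFiniteMeasure μ] {X : Ω → ℝ} (hX : AEStronglyMeasurable X μ) {p : ℕ} {q : ℝ}
    (hp : p ≠ 0) (hpq : (p : ℝ) ≤ q) (h : Integrable (fun ω => |X ω| ^ q) μ) : MemLp X p μ := by
  have hint := integrable_norm_rpow_of_le hX (Nat.cast_nonneg p) ((Nat.cast_nonneg p).trans hpq)
    hpq (by simpa only [Real.norm_eq_abs] using h)
  exact (integrable_norm_rpow_iff hX (by exact_mod_cast hp) (ENNReal.natCast_ne_top p)).1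
    (by simpa only [ENNReal.toReal_natCast] using hint)

theorem ae_tendsto_zero_of_summable_integral_abs_pow {Ω : Type*} {mΩ : MeasurableSpace Ω}
    {μ : Measure Ω} {f : ℕ → Ω → ℝ} {k : ℕ} (hk : k ≠ 0) (hf : ∀ m, MemLp (f m) k μ)
    (hs : Summable fun m => ∫ ω, |f m ω| ^ k ∂μ) :
    ∀ᵐ ω ∂μ, Tendsto (fun m => f m ω) atTop (𝓝 0) := by
  have hint : ∀ m, Integrable (fun ω => |f m ω| ^ k) μ := fun m => by
    simpa only [Real.norm_eq_abs] using (hf m).integrable_norm_pow hk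
  filter_upwards [ae_tendsto_zero_of_summable_integral_norm hint
    (by simpa only [norm_pow, abs_abs, Real.norm_eq_abs] using hs)] with ω hω
  exact tendsto_zero_of_tendsto_abs_pow_zero hk hω

section Moments

variable {Ω ι : Type*} {mΩ : MeasurableSpace Ω} {μ : Measure Ω}

lemma MeasureTheory.MemLp.integrable_pow_of_le [IsFiniteMeasure μ] {X : Ω → ℝ} {p k : ℕ}
    (hX : MemLp X p μ) (hk : k ≤ p) : Integrable (fun ω => X ω ^ k) μ := by
  have := (hX.mono_exponent (by exact_mod_cast hk : (k : ENNReal) ≤ p)).integrable_norm_pow'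
  exact (integrable_norm_iff (hX.1.pow k)).1 (by simpa only [Pi.pow_apply, norm_pow] using this)

lemma ProbabilityTheory.iIndepFun.indepFun_sum_of_notMem {X : ι → Ω → ℝ} (hX : iIndepFun X μ)
    (hmeas : ∀ i, AEMeasurable (X i) μ) {s : Finset ι} {a : ι} (ha : a ∉ s) :
    IndepFun (X a) (fun ω => ∑ i ∈ s, X i ω) μ := by
  simpa only [Finset.sum_fn] using (hX.indepFun_finsetSum_of_notMem₀ hmeas ha).symm

variable [IsProbabilityMeasure μ]

lemma ProbabilityTheory.IndepFun.integral_add_pow {X Y : Ω → ℝ} (hXY : IndepFun X Y μ) {n : ℕ}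
    (hX : MemLp X n μ) (hY : MemLp Y n μ) :
    ∫ ω, (X ω + Y ω) ^ n ∂μ = ∑ k ∈ Finset.range (n + 1),
      (∫ ω, X ω ^ k ∂μ) * (∫ ω, Y ω ^ (n - k) ∂μ) * n.choose k := by
  have hterm : ∀ k ∈ Finset.range (n + 1),
      IndepFun (fun ω => X ω ^ k) (fun ω => Y ω ^ (n - k)) μ ∧
        Integrable (fun ω => X ω ^ k * Y ω ^ (n - k) * n.choose k) μ := by
    intro k hk
    have hind := hXY.comp (measurable_id.pow_const k) (measurable_id.pow_const (n - k))
    refine ⟨hind, (hind.integrable_mul ?_ ?_).mul_const _⟩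
    · exact hX.integrable_pow_of_le (Nat.lt_succ_iff.1 (Finset.mem_range.1 hk))
    · exact hY.integrable_pow_of_le (Nat.sub_le n k)
  simp_rw [add_pow]
  rw [integral_finsetSum _ fun k hk => (hterm k hk).2]
  refine Finset.sum_congr rfl fun k hk => ?_
  rw [integral_mul_const]
  congr 1
  exact (hterm k hk).1.integral_mul_eq_mul_integral (hX.1.pow k) (hY.1.pow (n - k))

lemma ProbabilityTheory.IndepFun.integral_add_sq {X Y : Ω → ℝ} (hXY : IndepFun X Y μ)
    (hX : MemLp X 2 μ) (hY : MemLp Y 2 μ) (hX0 : ∫ ω, X ω ∂μ = 0) :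
    ∫ ω, (X ω + Y ω) ^ 2 ∂μ = ∫ ω, X ω ^ 2 ∂μ + ∫ ω, Y ω ^ 2 ∂μ := by
  rw [hXY.integral_add_pow (n := 2) hX hY]
  simp [Finset.sum_range_succ, hX0, add_comm]

lemma ProbabilityTheory.IndepFun.integral_add_pow_four {X Y : Ω → ℝ} (hXY : IndepFun X Y μ)
    (hX : MemLp X 4 μ) (hY : MemLp Y 4 μ) (hX0 : ∫ ω, X ω ∂μ = 0) (hY0 : ∫ ω, Y ω ∂μ = 0) :
    ∫ ω, (X ω + Y ω) ^ 4 ∂μ =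
      ∫ ω, X ω ^ 4 ∂μ + 6 * (∫ ω, X ω ^ 2 ∂μ) * (∫ ω, Y ω ^ 2 ∂μ) + ∫ ω, Y ω ^ 4 ∂μ := by
  rw [hXY.integral_add_pow (n := 4) hX hY]
  simp only [Nat.reduceAdd, Nat.reduceSub, Nat.add_one_sub_one, tsub_zero, tsub_self,
    Finset.sum_range_succ, Finset.range_one, Finset.sum_singleton, pow_zero, pow_one,
    integral_const, probReal_univ, smul_eq_mul, Nat.choose, Nat.cast_one, Nat.cast_ofNat, hX0, hY0,
    mul_zero, zero_mul, mul_one, one_mul, add_zero]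
  ring

lemma ProbabilityTheory.iIndepFun.integral_sum_sq {X : ι → Ω → ℝ} (hX : iIndepFun X μ)
    (hL2 : ∀ i, MemLp (X i) 2 μ) (hmean : ∀ i, ∫ ω, X i ω ∂μ = 0) (s : Finset ι) :
    ∫ ω, (∑ i ∈ s, X i ω) ^ 2 ∂μ = ∑ i ∈ s, ∫ ω, X i ω ^ 2 ∂μ := by
  classical
  induction s using Finset.induction_on with
  | empty => simp
  | insert a s ha ih =>
    simp_rw [Finset.sum_insert ha]
    rw [(hX.indepFun_sum_of_notMem (fun i => (hL2 i).1.aemeasurable) ha).integral_add_sq (hL2 a)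
      (memLp_finsetSum s fun i _ => hL2 i) (hmean a), ih]

lemma ProbabilityTheory.iIndepFun.integral_sum_pow_four_le {X : ι → Ω → ℝ} (hX : iIndepFun X μ)
    (hL4 : ∀ i, MemLp (X i) 4 μ) (hmean : ∀ i, ∫ ω, X i ω ∂μ = 0) (s : Finset ι) :
    ∫ ω, (∑ i ∈ s, X i ω) ^ 4 ∂μ ≤
      ∑ i ∈ s, ∫ ω, X i ω ^ 4 ∂μ + 3 * (∑ i ∈ s, ∫ ω, X i ω ^ 2 ∂μ) ^ 2 := by
  classical
  have hL2 : ∀ i, MemLp (X i) 2 μ := fun i => (hL4 i).mono_exponent (by norm_num)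
  induction s using Finset.induction_on with
  | empty => simp
  | insert a s ha ih =>
    have hsum0 : ∫ ω, ∑ i ∈ s, X i ω ∂μ = 0 := by
      rw [integral_finsetSum _ fun i _ => (hL4 i).integrable (by norm_num)]
      exact Finset.sum_eq_zero fun i _ => hmean i
    have hvar_nonneg : 0 ≤ ∫ ω, X a ω ^ 2 ∂μ := integral_nonneg fun ω => sq_nonneg _
    have hsum_nonneg : 0 ≤ ∑ i ∈ s, ∫ ω, X i ω ^ 2 ∂μ :=
      Finset.sum_nonneg fun i _ => integral_nonneg fun ω => sq_nonneg _
    simp_rw [Finset.sum_insert ha]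
    rw [(hX.indepFun_sum_of_notMem (fun i => (hL4 i).1.aemeasurable) ha).integral_add_pow_four
      (hL4 a) (memLp_finsetSum s fun i _ => hL4 i) (hmean a) hsum0, hX.integral_sum_sq hL2 hmean]
    nlinarith [mul_nonneg hvar_nonneg hvar_nonneg]

lemma ProbabilityTheory.iIndepFun.integral_weighted_sum_pow_four_le {X : ι → Ω → ℝ}
    (hX : iIndepFun X μ) (hL4 : ∀ i, MemLp (X i) 4 μ) (hmean : ∀ i, ∫ ω, X i ω ∂μ = 0)
    (hvar : ∀ i, ∫ ω, X i ω ^ 2 ∂μ = 1) {M : ℝ} (hM : ∀ i, ∫ ω, X i ω ^ 4 ∂μ ≤ M)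
    (a : ι → ℝ) (s : Finset ι) :
    ∫ ω, (∑ i ∈ s, a i * X i ω) ^ 4 ∂μ ≤ (M + 3) * (∑ i ∈ s, a i ^ 2) ^ 2 := by
  have hY : iIndepFun (fun i ω => a i * X i ω) μ :=
    hX.comp (fun i x => a i * x) fun i => measurable_const_mul (a i)
  have hbound := hY.integral_sum_pow_four_le (fun i => (hL4 i).const_mul (a i))
    (fun i => by rw [integral_const_mul, hmean, mul_zero]) s
  simp only [mul_pow, integral_const_mul, hvar, mul_one] at hbound
  set S := ∑ i ∈ s, a i ^ 2
  have hterm : ∀ i ∈ s, a i ^ 4 * ∫ ω, X i ω ^ 4 ∂μ ≤ a i ^ 2 * S * M := by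
    intro i hi
    have hS : a i ^ 2 ≤ S := Finset.single_le_sum (fun j _ => sq_nonneg (a j)) hi
    have h4 : 0 ≤ ∫ ω, X i ω ^ 4 ∂μ := integral_nonneg fun ω => by positivity
    calc a i ^ 4 * ∫ ω, X i ω ^ 4 ∂μ = a i ^ 2 * a i ^ 2 * ∫ ω, X i ω ^ 4 ∂μ := by ring
      _ ≤ a i ^ 2 * S * M :=
        mul_le_mul (mul_le_mul_of_nonneg_left hS (sq_nonneg _)) (hM i) h4 (by positivity)
  calc _ ≤ ∑ i ∈ s, a i ^ 2 * S * M + 3 * S ^ 2 :=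
        hbound.trans (add_le_add_left (Finset.sum_le_sum hterm) _)
    _ = (M + 3) * S ^ 2 := by rw [← Finset.sum_mul, ← Finset.sum_mul]; ring

end Moments

namespace Matrix

variable {l m n : Type*} [Fintype l] [Fintype m] [Fintype n]

theorem trace_mul_mul_transpose_eq_sum {R : Type*} [CommSemiring R] (S : Matrix l m R)
    (E : Matrix m n R) (A : Matrix l n R) :
    (S * E * Aᵀ).trace = ∑ i, ∑ j, (Sᵀ * A) i j * E i j := by
  rw [Matrix.mul_assoc, trace_mul_comm, Matrix.mul_assoc, ← transpose_transpose S,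
    ← transpose_mul, ← sum_hadamard_eq, transpose_transpose]
  simp only [hadamard_apply, mul_comm]

theorem sum_sq_mul_apply_le (M : Matrix l m ℝ) (N : Matrix m n ℝ) :
    ∑ i, ∑ j, (M * N) i j ^ 2 ≤ (M * Mᵀ).trace * (N * Nᵀ).trace := by
  simp only [← sum_hadamard_eq, hadamard_apply, ← pow_two]
  calc ∑ i, ∑ j, (M * N) i j ^ 2 ≤ ∑ i, ∑ j, (∑ k, M i k ^ 2) * ∑ k, N k j ^ 2 :=
        Finset.sum_le_sum fun i _ => Finset.sum_le_sum fun j _ =>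
          Finset.sum_mul_sq_le_sq_mul_sq _ _ _
    _ = (∑ i, ∑ k, M i k ^ 2) * ∑ k, ∑ j, N k j ^ 2 := by
      rw [Finset.sum_comm (f := fun k j => N k j ^ 2), Finset.sum_mul_sum]

theorem trace_mul_transpose_nonneg (M : Matrix l m ℝ) : 0 ≤ (M * Mᵀ).trace := by
  rw [← sum_hadamard_eq]
  exact Finset.sum_nonneg fun i _ => Finset.sum_nonneg fun j _ => mul_self_nonneg _

end Matrix

section Noise

variable {Ω : Type*} {mΩ : MeasurableSpace Ω} {μ : Measure Ω} {e : ℕ → ℕ → Ω → ℝ} {m p : ℕ}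

lemma memLp_trace_mul_noise_mul_transpose (S : Matrix (Fin m) (Fin m) ℝ)
    (A : Matrix (Fin m) (Fin p) ℝ) (hL4 : ∀ i j, MemLp (e i j) 4 μ) :
    MemLp (fun ω => (S * (Matrix.of fun i j => e i.val j.val ω : Matrix (Fin m) (Fin p) ℝ)
      * Aᵀ).trace) 4 μ := by
  simp_rw [trace_mul_mul_transpose_eq_sum]
  exact memLp_finsetSum _ fun i _ => memLp_finsetSum _ fun j _ => (hL4 i j).const_mul _

lemma nonneg_of_forall_integral_pow_four_le {M : ℝ} (hM : ∀ i j, ∫ ω, e i j ω ^ 4 ∂μ ≤ M) :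
    0 ≤ M :=
  (integral_nonneg fun ω => by positivity).trans (hM 0 0)

variable [IsProbabilityMeasure μ]

lemma integral_trace_mul_noise_mul_transpose_pow_four_le (S : Matrix (Fin m) (Fin m) ℝ)
    (A : Matrix (Fin m) (Fin p) ℝ) (hindep : iIndepFun (fun q : ℕ × ℕ => e q.1 q.2) μ)
    (hL4 : ∀ i j, MemLp (e i j) 4 μ) (hmean : ∀ i j, ∫ ω, e i j ω ∂μ = 0)
    (hvar : ∀ i j, ∫ ω, e i j ω ^ 2 ∂μ = 1) {M : ℝ} (hM : ∀ i j, ∫ ω, e i j ω ^ 4 ∂μ ≤ M) :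
    ∫ ω, (S * (Matrix.of fun i j => e i.val j.val ω : Matrix (Fin m) (Fin p) ℝ) * Aᵀ).trace ^ 4 ∂μ
      ≤ (M + 3) * ((Sᵀ * S).trace * (A * Aᵀ).trace) ^ 2 := by
  have hX : iIndepFun (fun q : Fin m × Fin p => e q.1 q.2) μ :=
    hindep.precomp (g := fun q : Fin m × Fin p => ((q.1 : ℕ), (q.2 : ℕ)))
      fun q q' h => Prod.ext (Fin.ext (Prod.ext_iff.1 h).1) (Fin.ext (Prod.ext_iff.1 h).2)
  have hM0 : 0 ≤ M + 3 := by linarith [nonneg_of_forall_integral_pow_four_le hM]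
  simp_rw [trace_mul_mul_transpose_eq_sum, ← Fintype.sum_prod_type']
  calc _ ≤ (M + 3) * (∑ q : Fin m × Fin p, (Sᵀ * A) q.1 q.2 ^ 2) ^ 2 :=
        hX.integral_weighted_sum_pow_four_le (fun q => hL4 q.1 q.2) (fun q => hmean q.1 q.2)
          (fun q => hvar q.1 q.2) (fun q => hM q.1 q.2) _ _
    _ ≤ _ := by
      gcongr
      rw [Fintype.sum_prod_type]
      simpa only [transpose_transpose] using sum_sq_mul_apply_le Sᵀ A

lemma integral_normalized_trace_mul_noise_mul_transpose_pow_four_le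
    (S : Matrix (Fin m) (Fin m) ℝ) (A : Matrix (Fin m) (Fin p) ℝ)
    (hindep : iIndepFun (fun q : ℕ × ℕ => e q.1 q.2) μ) (hL4 : ∀ i j, MemLp (e i j) 4 μ)
    (hmean : ∀ i j, ∫ ω, e i j ω ∂μ = 0) (hvar : ∀ i j, ∫ ω, e i j ω ^ 2 ∂μ = 1) {M : ℝ}
    (hM : ∀ i j, ∫ ω, e i j ω ^ 4 ∂μ ≤ M) {C₁ C₂ : ℝ} (hS : 1 / (m : ℝ) * (Sᵀ * S).trace ≤ C₁)
    (hA : 1 / (m * p : ℝ) * (A * Aᵀ).trace ≤ C₂) :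
    ∫ ω, (1 / (m * p : ℝ) *
        (S * (Matrix.of fun i j => e i.val j.val ω : Matrix (Fin m) (Fin p) ℝ) * Aᵀ).trace) ^ 4 ∂μ
      ≤ (M + 3) * (C₁ * C₂) ^ 2 * (1 / (p : ℝ) ^ 2) := by
  have hS0 : 0 ≤ 1 / (m : ℝ) * (Sᵀ * S).trace := by
    have := trace_mul_transpose_nonneg Sᵀ
    rw [transpose_transpose] at this
    positivity
  have hA0 : 0 ≤ 1 / (m * p : ℝ) * (A * Aᵀ).trace := by
    have := trace_mul_transpose_nonneg A
    positivity
  simp_rw [mul_pow (1 / (m * p : ℝ))]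
  rw [integral_const_mul]
  calc (1 / (m * p : ℝ)) ^ 4 * _
      ≤ (1 / (m * p : ℝ)) ^ 4 * ((M + 3) * ((Sᵀ * S).trace * (A * Aᵀ).trace) ^ 2) := by
        gcongr
        exact integral_trace_mul_noise_mul_transpose_pow_four_le S A hindep hL4 hmean hvar hM
    _ = (M + 3) * (1 / (m : ℝ) * (Sᵀ * S).trace * (1 / (m * p : ℝ) * (A * Aᵀ).trace)) ^ 2
          * (1 / (p : ℝ) ^ 2) := by ring -- `ring` splits `(m p)⁻¹ = m⁻¹ p⁻¹`, even when `m p = 0`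
    _ ≤ (M + 3) * (C₁ * C₂) ^ 2 * (1 / (p : ℝ) ^ 2) := by
        have hM0 : 0 ≤ M + 3 := by linarith [nonneg_of_forall_integral_pow_four_le hM]
        gcongr
        exact hS0.trans hS

end Noise

theorem stmt8_general
    {Ω : Type*} [MeasureSpace Ω] [IsProbabilityMeasure (ℙ : Measure Ω)]
    (c : ℝ)
    (p : ℕ → ℕ)
    (hp : Tendsto (fun m : ℕ => (m : ℝ) / (p m : ℝ)) atTop (nhds c))
    (n : ℕ)
    (e : ℕ → ℕ → Ω → ℝ)
    (hmeas : ∀ i j, Measurable (e i j))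
    (hindep : iIndepFun (fun q : ℕ × ℕ => e q.1 q.2) ℙ)
    (hident : ∀ i j, IdentDistrib (e i j) (e 0 0) ℙ ℙ)
    (hmean : ∀ i j, ∫ ω, e i j ω = 0)
    (hvar : ∀ i j, ∫ ω, (e i j ω) ^ 2 = 1)
    (ε : ℝ) (hε : 0 < ε)
    (hmom : ∀ i j, Integrable (fun ω => |e i j ω| ^ ((4 : ℝ) + ε)))
    (Sig : ∀ m : ℕ, Matrix (Fin m) (Fin m) ℝ)
    (hSigTr : ∃ C : ℝ, ∀ m : ℕ, (1 / (m : ℝ)) * (Sig m).trace ≤ C)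
    (Sqrt : ∀ m : ℕ, Matrix (Fin m) (Fin m) ℝ)
    (hSqrtSymm : ∀ m, (Sqrt m).IsSymm)
    (hSqrtSq : ∀ m, Sqrt m * Sqrt m = Sig m)
    (A : ∀ m : ℕ, Matrix (Fin m) (Fin (p m)) ℝ)
    (hA : ∃ C : ℝ, ∀ m : ℕ, (1 / (m * p m : ℝ)) * (A m * (A m)ᵀ).trace ≤ C)
    (Abar : ∀ m : ℕ, Ω → Matrix (Fin m) (Fin (p m)) ℝ)
    (hAbar : ∀ m ω, Abar m ω =
      A m + (1 / Real.sqrt n) •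
      (Sqrt m * (Matrix.of fun i j => e i.val j.val ω : Matrix (Fin m) (Fin (p m)) ℝ))) :
    ∀ᵐ ω, Tendsto
      (fun m : ℕ => (1 / (m * p m : ℝ)) * (Abar m ω * (A m)ᵀ).trace - (1 / (m * p m : ℝ)) * (A m * (A m)ᵀ).trace)
      atTop (nhds 0) := by
  obtain ⟨C₁, hC₁⟩ := hSigTr
  obtain ⟨C₂, hC₂⟩ := hA
  have hL4 : ∀ i j, MemLp (e i j) 4 ℙ := fun i j =>
    memLp_of_integrable_abs_rpow (hmeas i j).aestronglyMeasurable four_ne_zero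
      (by push_cast; linarith) (hmom i j)
  have hM : ∀ i j, ∫ ω, e i j ω ^ 4 ≤ ∫ ω, e 0 0 ω ^ 4 := fun i j =>
    ((hident i j).comp (measurable_id.pow_const 4)).integral_eq.le
  set Y : ℕ → Ω → ℝ := fun m ω => 1 / (m * p m : ℝ) *
    (Sqrt m * (Matrix.of fun i j => e i.val j.val ω : Matrix (Fin m) (Fin (p m)) ℝ)
      * (A m)ᵀ).trace
  have hY4 : ∀ m, ∫ ω, |Y m ω| ^ 4 ≤
      ((∫ ω, e 0 0 ω ^ 4) + 3) * (C₁ * C₂) ^ 2 * (1 / (p m : ℝ) ^ 2) := fun m => by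
    simp only [Even.pow_abs ⟨2, rfl⟩]
    refine integral_normalized_trace_mul_noise_mul_transpose_pow_four_le _ _ hindep hL4 hmean
      hvar hM ?_ (hC₂ m)
    rw [(hSqrtSymm m).eq, hSqrtSq m]
    exact hC₁ m
  have hconv : ∀ᵐ ω, Tendsto (fun m => Y m ω) atTop (𝓝 0) :=
    ae_tendsto_zero_of_summable_integral_abs_pow four_ne_zero
      (fun m => (memLp_trace_mul_noise_mul_transpose _ _ hL4).const_mul _)
      (Summable.of_nonneg_of_le (fun m => integral_nonneg fun ω => by positivity) hY4
        ((summable_one_div_sq_of_tendsto_div hp).mul_left _))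
  filter_upwards [hconv] with ω hω
  convert hω.const_mul (1 / Real.sqrt n) using 2 with m
  · rw [hAbar, Matrix.add_mul, Matrix.smul_mul, trace_add, trace_smul, smul_eq_mul]
    ring
  · rw [mul_zero]

/-- column-correlated noise: a.s. (1/(mp))·tr(Ā_m A_mᵀ) − (1/(mp))·tr(A_m A_mᵀ) → 0. -/
theorem stmt8
    {Ω : Type*} [MeasureSpace Ω] [IsProbabilityMeasure (ℙ : Measure Ω)]
    (c : ℝ) (hc : 0 < c)
    (p : ℕ → ℕ)
    (hp : Tendsto (fun m : ℕ => (m : ℝ) / (p m : ℝ)) atTop (nhds c))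
    (n : ℕ) (hn : 2 ≤ n)
    (e : ℕ → ℕ → Ω → ℝ)
    (hmeas : ∀ i j, Measurable (e i j))
    (hindep : iIndepFun (fun q : ℕ × ℕ => e q.1 q.2) ℙ)
    (hident : ∀ i j, IdentDistrib (e i j) (e 0 0) ℙ ℙ)
    (hint : ∀ i j, Integrable (e i j))
    (hsq : ∀ i j, Integrable (fun ω => (e i j ω) ^ 2))
    (hmean : ∀ i j, ∫ ω, e i j ω = 0)
    (hvar : ∀ i j, ∫ ω, (e i j ω) ^ 2 = 1)
    (ε : ℝ) (hε : 0 < ε)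
    (hmom : ∀ i j, Integrable (fun ω => |e i j ω| ^ ((4 : ℝ) + ε)))
    (Sig : ∀ m : ℕ, Matrix (Fin m) (Fin m) ℝ)
    (hSigSymm : ∀ m, (Sig m).IsSymm)
    (hSigPD : ∀ m, (Sig m).PosDef)
    (hSigTr : ∃ C : ℝ, ∀ m : ℕ, (1 / (m : ℝ)) * (Sig m).trace ≤ C)
    (Sqrt : ∀ m : ℕ, Matrix (Fin m) (Fin m) ℝ)
    (hSqrtSymm : ∀ m, (Sqrt m).IsSymm)
    (hSqrtPD : ∀ m, (Sqrt m).PosDef)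
    (hSqrtSq : ∀ m, Sqrt m * Sqrt m = Sig m)
    (A : ∀ m : ℕ, Matrix (Fin m) (Fin (p m)) ℝ)
    (hA : ∃ C : ℝ, ∀ m : ℕ, (1 / (m * p m : ℝ)) * (A m * (A m)ᵀ).trace ≤ C)
    (U : ∀ m : ℕ, Matrix (Fin m) (Fin (p m)) ℝ)
    (hU : ∀ m i j, U m i j = 1)
    (Abar : ∀ m : ℕ, Ω → Matrix (Fin m) (Fin (p m)) ℝ)
    (hAbar : ∀ m ω, Abar m ω =
      A m + (1 / Real.sqrt n) •
      (Sqrt m * (Matrix.of fun i j => e i.val j.val ω : Matrix (Fin m) (Fin (p m)) ℝ))) :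
    ∀ᵐ ω, Tendsto
      (fun m : ℕ => (1 / (m * p m : ℝ)) * (Abar m ω * (A m)ᵀ).trace - (1 / (m * p m : ℝ)) * (A m * (A m)ᵀ).trace)
      atTop (nhds 0) :=
  stmt8_general c p hp n e hmeas hindep hident hmean hvar ε hε hmom Sig hSigTr Sqrt hSqrtSymm
    hSqrtSq A hA Abar hAbar
end

section
/- Almost surely, (1/(m·p(m)))·Σ_{1 ≤ i ≤ m, 1 ≤ j ≤ p(m)} a_{ij}·e_{ij} → 0 as m → ∞. -/
/-!
The `m`-th weighted average `X m` is centred with second moment `(m p(m))⁻² Σ a_{ij}²`, which is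
at most `C / (m p(m)) = O(1 / m²)` because `m / p(m)` is bounded. So `Σ_m 𝔼[X m ²] < ∞`, hence
`Σ_m X m ²` is almost surely finite and `X m → 0` almost surely.
-/

open MeasureTheory ProbabilityTheory Filter Finset Topology

section

variable {Ω : Type*} [MeasurableSpace Ω] {μ : Measure Ω}

theorem ae_tendsto_zero_of_summable_integral_sq {X : ℕ → Ω → ℝ}
    (hint : ∀ n, Integrable (fun ω => X n ω ^ 2) μ)
    (hsum : Summable fun n => ∫ ω, X n ω ^ 2 ∂μ) :
    ∀ᵐ ω ∂μ, Tendsto (fun n => X n ω) atTop (𝓝 0) := by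
  have hmeas (n : ℕ) : AEMeasurable (fun ω => ENNReal.ofReal (X n ω ^ 2)) μ :=
    (hint n).aemeasurable.ennreal_ofReal
  have hfin : ∫⁻ ω, ∑' n, ENNReal.ofReal (X n ω ^ 2) ∂μ ≠ ⊤ := by
    simp_rw [lintegral_tsum hmeas, ← ofReal_integral_eq_lintegral_ofReal (hint _)
      (ae_of_all _ fun _ => sq_nonneg _),
      ← ENNReal.ofReal_tsum_of_nonneg (fun n => integral_nonneg fun _ => sq_nonneg _) hsum]
    exact ENNReal.ofReal_ne_top
  filter_upwards [ae_lt_top' (AEMeasurable.tsum hmeas) hfin] with ω hω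
  have hsq : Tendsto (fun n => X n ω ^ 2) atTop (𝓝 0) := by
    simpa only [ENNReal.toReal_ofReal (sq_nonneg _)] using
      (ENNReal.summable_toReal hω.ne).tendsto_atTop_zero
  refine (tendsto_zero_iff_abs_tendsto_zero _).2 ?_
  simpa only [Real.sqrt_sq_eq_abs, Real.sqrt_zero, Function.comp_def] using hsq.sqrt

variable [IsProbabilityMeasure μ]

theorem integral_sq_sum_of_pairwise_indepFun {ι : Type*} {Y : ι → Ω → ℝ} {s : Finset ι}
    (hmem : ∀ i ∈ s, MemLp (Y i) 2 μ) (hindep : Set.Pairwise ↑s fun i j => Y i ⟂ᵢ[μ] Y j)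
    (hmean : ∀ i ∈ s, μ[Y i] = 0) :
    ∫ ω, (∑ i ∈ s, Y i ω) ^ 2 ∂μ = ∑ i ∈ s, ∫ ω, Y i ω ^ 2 ∂μ := by
  have hsum_mean : μ[∑ i ∈ s, Y i] = 0 := by
    simp only [Finset.sum_apply]
    rw [integral_finsetSum s fun i hi => (hmem i hi).integrable one_le_two]
    exact Finset.sum_eq_zero hmean
  calc ∫ ω, (∑ i ∈ s, Y i ω) ^ 2 ∂μ = Var[∑ i ∈ s, Y i; μ] := by
        rw [variance_of_integral_eq_zero
          (memLp_finsetSum' s hmem).aestronglyMeasurable.aemeasurable hsum_mean]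
        simp only [Finset.sum_apply]
    _ = ∑ i ∈ s, Var[Y i; μ] := IndepFun.variance_sum hmem hindep
    _ = ∑ i ∈ s, ∫ ω, Y i ω ^ 2 ∂μ := Finset.sum_congr rfl fun i hi =>
        variance_of_integral_eq_zero (hmem i hi).aestronglyMeasurable.aemeasurable (hmean i hi)

theorem integral_sq_sum_mul_of_iIndepFun {ι : Type*} {e : ι → Ω → ℝ} (hindep : iIndepFun e μ)
    (hmem : ∀ i, MemLp (e i) 2 μ) (hmean : ∀ i, μ[e i] = 0)
    (hvar : ∀ i, ∫ ω, e i ω ^ 2 ∂μ = 1) (a : ι → ℝ) (s : Finset ι) :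
    ∫ ω, (∑ i ∈ s, a i * e i ω) ^ 2 ∂μ = ∑ i ∈ s, a i ^ 2 := by
  have hpair : Set.Pairwise ↑s fun i j => (fun ω => a i * e i ω) ⟂ᵢ[μ] fun ω => a j * e j ω :=
    fun i _ j _ hij => (hindep.indepFun hij).comp (measurable_const_mul _) (measurable_const_mul _)
  rw [integral_sq_sum_of_pairwise_indepFun (fun i _ => (hmem i).const_mul _) hpair
    fun i _ => by rw [integral_const_mul, hmean, mul_zero]]
  simp_rw [mul_pow, integral_const_mul, hvar, mul_one]

end

lemma summable_one_div_mul_of_bddAbove_div {p : ℕ → ℕ}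
    (hp : BddAbove (Set.range fun m : ℕ => (m : ℝ) / p m)) :
    Summable fun m : ℕ => 1 / (m * p m : ℝ) := by
  obtain ⟨K, hK⟩ := hp
  refine Summable.of_nonneg_of_le (fun m => by positivity) (fun m => ?_)
    ((Real.summable_one_div_nat_pow.mpr one_lt_two).mul_left K)
  have hm : (m : ℝ) / p m ≤ K := hK ⟨m, rfl⟩
  calc 1 / (m * p m : ℝ) = m / p m * (1 / (m : ℝ) ^ 2) := by
        rcases eq_or_ne (m : ℝ) 0 with h | h
        · simp [h]
        · field_simp
    _ ≤ K * (1 / (m : ℝ) ^ 2) := by gcongr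

lemma sum_fin_sum_fin_eq_sum_product {M : Type*} [AddCommMonoid M] (f : ℕ → ℕ → M) (m n : ℕ) :
    ∑ i : Fin m, ∑ j : Fin n, f i j = ∑ q ∈ range m ×ˢ range n, f q.1 q.2 := by
  simp only [Finset.sum_product, Fin.sum_univ_eq_sum_range (f _),
    Fin.sum_univ_eq_sum_range (fun i => ∑ j ∈ range n, f i j)]

theorem stmt14_general
    {Ω : Type*} [MeasureSpace Ω] [IsProbabilityMeasure (ℙ : Measure Ω)]
    (c : ℝ)
    (p : ℕ → ℕ)
    (hp : Tendsto (fun m : ℕ => (m : ℝ) / (p m : ℝ)) atTop (nhds c))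
    (e : ℕ → ℕ → Ω → ℝ)
    (hmeas : ∀ i j, Measurable (e i j))
    (hindep : iIndepFun (fun q : ℕ × ℕ => e q.1 q.2) ℙ)
    (hsq : ∀ i j, Integrable (fun ω => (e i j ω) ^ 2))
    (hmean : ∀ i j, ∫ ω, e i j ω = 0)
    (hvar : ∀ i j, ∫ ω, (e i j ω) ^ 2 = 1)
    (a : ℕ → ℕ → ℝ)
    (ha : ∃ C : ℝ, ∀ m : ℕ,
      (1 / (m * p m : ℝ)) * ∑ i : Fin m, ∑ j : Fin (p m), (a i j) ^ 2 ≤ C) :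
    ∀ᵐ ω, Tendsto
      (fun m : ℕ => (1 / (m * p m : ℝ)) * ∑ i : Fin m, ∑ j : Fin (p m), a i j * e i j ω)
      atTop (nhds 0) := by
  obtain ⟨C, hC⟩ := ha
  simp_rw [sum_fin_sum_fin_eq_sum_product fun i j => a i j ^ 2] at hC
  set r : ℕ → ℝ := fun m => 1 / (m * p m : ℝ)
  set T : ℕ → Finset (ℕ × ℕ) := fun m => range m ×ˢ range (p m)
  have hmem (q : ℕ × ℕ) : MemLp (e q.1 q.2) 2 :=
    (memLp_two_iff_integrable_sq (hmeas _ _).aestronglyMeasurable).2 (hsq _ _)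
  have hmoment (m : ℕ) : ∫ ω, (r m * ∑ q ∈ T m, a q.1 q.2 * e q.1 q.2 ω) ^ 2
      = r m * (r m * ∑ q ∈ T m, a q.1 q.2 ^ 2) := by
    simp_rw [mul_pow, integral_const_mul, integral_sq_sum_mul_of_iIndepFun hindep hmem
      (fun q => hmean q.1 q.2) (fun q => hvar q.1 q.2) (fun q => a q.1 q.2)]
    ring
  have hsummable : Summable fun m => r m * (r m * ∑ q ∈ T m, a q.1 q.2 ^ 2) :=
    Summable.of_nonneg_of_le (fun m => by positivity)
      (fun m => mul_le_mul_of_nonneg_left (hC m) (by positivity))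
      ((summable_one_div_mul_of_bddAbove_div hp.bddAbove_range).mul_right C)
  have hint (m : ℕ) : Integrable fun ω => (r m * ∑ q ∈ T m, a q.1 q.2 * e q.1 q.2 ω) ^ 2 :=
    ((memLp_finsetSum (T m) fun q _ => (hmem q).const_mul _).const_mul (r m)).integrable_sq
  filter_upwards [ae_tendsto_zero_of_summable_integral_sq hint
    (hsummable.congr fun m => (hmoment m).symm)] with ω hω
  exact hω.congr fun m => by rw [sum_fin_sum_fin_eq_sum_product fun i j => a i j * e i j ω]

/-- weighted SLLN: almost surely
`(1/(m·p(m))) Σ_{i<m, j<p(m)} a_{ij}·e_{ij} → 0` as `m → ∞`, for deterministic weights with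
`(1/(m·p(m))) Σ a_{ij}²` uniformly bounded. -/
theorem stmt14
    {Ω : Type*} [MeasureSpace Ω] [IsProbabilityMeasure (ℙ : Measure Ω)]
    (c : ℝ) (hc : 0 < c)
    (p : ℕ → ℕ)
    (hp : Tendsto (fun m : ℕ => (m : ℝ) / (p m : ℝ)) atTop (nhds c))
    (e : ℕ → ℕ → Ω → ℝ)
    (hmeas : ∀ i j, Measurable (e i j))
    (hindep : iIndepFun (fun q : ℕ × ℕ => e q.1 q.2) ℙ)
    (hident : ∀ i j, IdentDistrib (e i j) (e 0 0) ℙ ℙ)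
    (hint : ∀ i j, Integrable (e i j))
    (hsq : ∀ i j, Integrable (fun ω => (e i j ω) ^ 2))
    (hmean : ∀ i j, ∫ ω, e i j ω = 0)
    (hvar : ∀ i j, ∫ ω, (e i j ω) ^ 2 = 1)
    (a : ℕ → ℕ → ℝ)
    (ha : ∃ C : ℝ, ∀ m : ℕ,
      (1 / (m * p m : ℝ)) * ∑ i : Fin m, ∑ j : Fin (p m), (a i j) ^ 2 ≤ C) :
    ∀ᵐ ω, Tendsto
      (fun m : ℕ => (1 / (m * p m : ℝ)) * ∑ i : Fin m, ∑ j : Fin (p m), a i j * e i j ω)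
      atTop (nhds 0) :=
  stmt14_general c p hp e hmeas hindep hsq hmean hvar a ha
end
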